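/- Let T be a rooted tree and let Q be a collection of connected subgraphs of T whose vertex sets partition V(T). For X ⊆ V(T), write Q(X) = {Q ∈ Q : V(Q) ∩ X ≠ ∅}. Let X, Y ⊆ V(T) with X ⊆ Y and LCA(T,X) = X. If Q(X) = Q(Y), then Q(Y) = Q(LCA(T,Y)). -/

import Mathlib

open SimpleGraph

section Defs

variable {V : Type*} {ι : Type*} {α : Type*}

/-- `G` has no `K_t`-minor: there is no family of `t` pairwise disjoint nonempty connected
vertex sets with an edge of `G` between any two of them. -/
def CliqueMinorFree (G : SimpleGraph V) (t : ℕ) : Prop :=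
  ¬ ∃ B : Fin t → Set V,
      (∀ i, (G.induce (B i)).Connected) ∧
      (∀ i j, i ≠ j → Disjoint (B i) (B j)) ∧
      (∀ i j, i ≠ j → ∃ u ∈ B i, ∃ w ∈ B j, G.Adj u w)

/-- `(T, W)` is a tree decomposition of `G`. -/
structure IsTreeDecomp (G : SimpleGraph V) (T : SimpleGraph ι) (W : ι → Set V) : Prop where
  isTree : T.IsTree
  bagsConnected : ∀ u : V, (T.induce {x : ι | u ∈ W x}).Connected
  edgeInBag : ∀ ⦃u w : V⦄, G.Adj u w → ∃ x, u ∈ W x ∧ w ∈ W x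

/-- The tree decomposition with bags `W` has width at most `w`. -/
def TDWidthLE (W : ι → Set V) (w : ℕ) : Prop := ∀ x, (W x).ncard ≤ w + 1

/-- `φ` is a `p`-centered coloring of `G`: every nonempty connected subgraph on which `φ`
uses at most `p` colors has a vertex of unique color. -/
def IsCenteredColoring (p : ℕ) (G : SimpleGraph V) (φ : V → α) : Prop :=
  ∀ H : G.Subgraph, H.Connected →
    p < (φ '' H.verts).ncard ∨ ∃ u ∈ H.verts, ∀ w ∈ H.verts, w ≠ u → φ w ≠ φ u

/-- The `p`-centered chromatic number of `G`. -/
noncomputable def centeredChromaticNumber (p : ℕ) (G : SimpleGraph V) : ℕ :=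
  sInf {k | ∃ φ : V → Fin k, IsCenteredColoring p G φ}

/-- `φ` is a `p`-centered coloring of `(G, σ)`: on every nonempty connected subgraph either
more than `p` colors are used, or the `σ`-minimal vertex has a unique color. -/
def IsOrderedCenteredColoring (p : ℕ) (G : SimpleGraph V) (σ : V → ℕ) (φ : V → α) : Prop :=
  ∀ H : G.Subgraph, H.Connected →
    p < (φ '' H.verts).ncard ∨
      ∃ u ∈ H.verts, (∀ w ∈ H.verts, σ u ≤ σ w) ∧ ∀ w ∈ H.verts, w ≠ u → φ w ≠ φ u

/-- The `p`-centered chromatic number of `(G, σ)`. -/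
noncomputable def orderedCenteredChromaticNumber (p : ℕ) (G : SimpleGraph V) (σ : V → ℕ) : ℕ :=
  sInf {k | ∃ φ : V → Fin k, IsOrderedCenteredColoring p G σ φ}

/-- `σ` (an injection into `ℕ`, representing a linear ordering of the vertices) is an
elimination ordering of the tree decomposition with bags `W`. -/
def IsEliminationOrdering (W : ι → Set V) (σ : V → ℕ) : Prop :=
  Function.Injective σ ∧
    ∀ u : V, ∃ x : ι, ∀ w : V, (∃ z, u ∈ W z ∧ w ∈ W z) → σ w < σ u → w ∈ W x

/-- `Pa` is a partition of the vertex set into nonempty parts. -/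
def IsVertexPartition (Pa : Set (Set V)) : Prop :=
  (∀ P ∈ Pa, P.Nonempty) ∧ ∀ u : V, ∃! P, P ∈ Pa ∧ u ∈ P

/-- The quotient graph `G/Pa`. -/
def quotientGraph (G : SimpleGraph V) (Pa : Set (Set V)) : SimpleGraph Pa where
  Adj P Q := P ≠ Q ∧ ∃ u ∈ (P : Set V), ∃ w ∈ (Q : Set V), G.Adj u w
  symm := by
    constructor
    rintro P Q ⟨hPQ, u, hu, w, hw, hadj⟩
    exact ⟨hPQ.symm, w, hw, u, hu, hadj.symm⟩
  loopless := by constructor; rintro P ⟨h, -⟩; exact h rfl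

/-- The neighborhood of a set of vertices. -/
def nbhdSet (G : SimpleGraph V) (S : Set V) : Set V :=
  {w | w ∉ S ∧ ∃ u ∈ S, G.Adj u w}

/-- `C` is (the vertex set of) a connected component of `G - Z`. -/
def IsCompOfDel (G : SimpleGraph V) (Z C : Set V) : Prop :=
  Disjoint C Z ∧ (G.induce C).Connected ∧
    ∀ u ∈ C, ∀ w, G.Adj u w → w ∉ Z → w ∈ C

/-- The neighborhood of a set of vertices in a subgraph. -/
def subNbhdSet {G : SimpleGraph V} (G₀ : G.Subgraph) (S : Set V) : Set V :=
  {w | w ∉ S ∧ ∃ u ∈ S, G₀.Adj u w}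

/-- `C` is (the vertex set of) a connected component of `G₀ - Z`, for a subgraph `G₀`. -/
def IsCompOfSubDel {G : SimpleGraph V} (G₀ : G.Subgraph) (Z C : Set V) : Prop :=
  C ⊆ G₀.verts \ Z ∧ (G₀.induce C).Connected ∧
    ∀ u ∈ C, ∀ w ∈ G₀.verts \ Z, G₀.Adj u w → w ∈ C

/-- `φ` is a `(p,c)`-good coloring of `G`. -/
def IsGoodColoring (p c : ℕ) (G : SimpleGraph V) (φ : V → ℕ) : Prop :=
  ∀ G₀ : G.Subgraph, ∀ 𝓕 : Set G.Subgraph,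
    (∀ F ∈ 𝓕, F ≤ G₀ ∧ F.Connected) →
    ∀ d : ℕ, 0 < d →
      (¬ ∃ f : Fin (d + 1) → G.Subgraph,
          (∀ i, f i ∈ 𝓕) ∧ ∀ i j, i ≠ j → Disjoint (f i).verts (f j).verts) →
      ∃ Z : Set V, Z ⊆ G₀.verts ∧ ∃ ψ : V → ℕ,
        (∀ u ∈ Z, 1 ≤ ψ u ∧ ψ u ≤ c * d) ∧
        (∀ F ∈ 𝓕, (F.verts ∩ Z).Nonempty) ∧
        (∀ H : G.Subgraph, H ≤ G₀ → H.Connected → (H.verts ∩ Z).Nonempty →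
          p < (φ '' H.verts).ncard ∨
            ∃ u ∈ H.verts ∩ Z, ∀ w ∈ H.verts ∩ Z, w ≠ u → (φ w, ψ w) ≠ (φ u, ψ u)) ∧
        (∀ C : Set V, IsCompOfSubDel G₀ Z C →
          ∃ D₁ D₂ : Set V, ∀ D, IsCompOfSubDel G₀ C D →
            (subNbhdSet G₀ C ∩ D).Nonempty → D = D₁ ∨ D = D₂)

/-- Adjacency in the torso of `W` in `G`: two distinct vertices of `W` joined by a
walk of `G` all of whose internal vertices avoid `W`. -/
def TorsoAdj (G : SimpleGraph V) (W : Set V) (u w : V) : Prop :=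
  u ∈ W ∧ w ∈ W ∧ u ≠ w ∧
    ∃ q : G.Walk u w, ∀ x ∈ q.support, x ∈ W → x = u ∨ x = w

/-- The torso of `W` in `G`. -/
def torso (G : SimpleGraph V) (W : Set V) : SimpleGraph W where
  Adj u w := TorsoAdj G W ↑u ↑w
  symm := by
    constructor
    intro u w h
    obtain ⟨hu, hw, hne, q, hq⟩ := h
    exact ⟨hw, hu, hne.symm, q.reverse, fun x hx hxW => by
      rw [Walk.support_reverse, List.mem_reverse] at hx
      exact (hq x hx hxW).symm⟩
  loopless := by
    constructor
    intro u h
    exact h.2.2.1 rfl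

/-- In the tree `T` rooted at `r`, the vertex `u` is an ancestor of `w`
(i.e. `u` lies on every walk from the root to `w`). -/
def IsAncestor (T : SimpleGraph α) (r u w : α) : Prop :=
  ∀ q : T.Walk r w, u ∈ q.support

/-- `x` is the lowest common ancestor of `u` and `w` in the tree `T` rooted at `r`. -/
def IsLCA (T : SimpleGraph α) (r x u w : α) : Prop :=
  IsAncestor T r x u ∧ IsAncestor T r x w ∧
    ∀ y, IsAncestor T r y u → IsAncestor T r y w → IsAncestor T r y x

/-- The lowest common ancestor closure of `Y` in the tree `T` rooted at `r`. -/
def lcaClosure (T : SimpleGraph α) (r : α) (Y : Set α) : Set α :=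
  {x | ∃ u ∈ Y, ∃ w ∈ Y, IsLCA T r x u w}

/-- The vertex set of `T_{x|y}`: the component of `x` in `T` minus the edge `xy`.
(For adjacent `x y` in a tree these are the vertices `z` such that
the path from `z` to `y` passes through `x`.) -/
def sideVerts (T : SimpleGraph α) (x y : α) : Set α :=
  {z | ∀ q : T.Walk z y, x ∈ q.support}

/-- The tree decomposition `(T, W)` of `G` is natural. -/
def IsNaturalTD (G : SimpleGraph V) (T : SimpleGraph ι) (W : ι → Set V) : Prop :=
  ∀ x y, T.Adj x y → (G.induce (⋃ z ∈ sideVerts T x y, W z)).Connected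

end Defs

/-!
If `x = lca(u, w)` lies outside `Y`, then `x ≠ u, w`, and `u`, `w` lie in different components of
`T - x`, both below `x`. The part containing `u` meets `X` at some `u'`, is connected and avoids `x`
(it is not the part of `x`, which misses `Y`), so `u'` lies in the component of `u`; likewise for
`w'`. Being an ancestor of both, and separating them, `x` is then `lca(u', w') ∈ LCA(X) = X ⊆ Y`.
-/

namespace SimpleGraph

variable {V : Type*} {G : SimpleGraph V} {x u v w : V}

/-- `u` and `v` lie in the same component of `G - x`. -/
def ReachableAvoiding (G : SimpleGraph V) (x u v : V) : Prop :=
  ∃ p : G.Walk u v, x ∉ p.support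

namespace ReachableAvoiding

lemma symm (h : G.ReachableAvoiding x u v) : G.ReachableAvoiding x v u := by
  obtain ⟨p, hp⟩ := h
  exact ⟨p.reverse, by rwa [Walk.support_reverse, List.mem_reverse]⟩

lemma trans (h₁ : G.ReachableAvoiding x u v) (h₂ : G.ReachableAvoiding x v w) :
    G.ReachableAvoiding x u w := by
  obtain ⟨p, hp⟩ := h₁
  obtain ⟨q, hq⟩ := h₂
  exact ⟨p.append q, by rw [Walk.mem_support_append_iff]; exact not_or_intro hp hq⟩

lemma ne_left (h : G.ReachableAvoiding x u v) : x ≠ u := by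
  rintro rfl
  obtain ⟨p, hp⟩ := h
  exact hp p.start_mem_support

lemma ne_right (h : G.ReachableAvoiding x u v) : x ≠ v :=
  h.symm.ne_left

lemma of_induce_preconnected {S : Set V} (hS : (G.induce S).Preconnected) (hu : u ∈ S)
    (hv : v ∈ S) (hx : x ∉ S) : G.ReachableAvoiding x u v := by
  obtain ⟨p⟩ := hS ⟨u, hu⟩ ⟨v, hv⟩
  let q := p.map (Embedding.induce S).toHom
  refine ⟨q, fun hxq => ?_⟩
  obtain ⟨y, -, rfl⟩ := List.mem_map.mp (Walk.support_map _ p ▸ hxq)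
  exact hx y.2

end ReachableAvoiding

lemma Walk.exists_adj_reachableAvoiding (p : G.Walk x u) (hxu : x ≠ u) :
    ∃ c ∈ p.support, G.Adj x c ∧ G.ReachableAvoiding x c u := by
  classical
  obtain ⟨c, hadj, q, hq⟩ := Walk.exists_eq_cons_of_ne hxu p.bypass
  have hpath := p.bypass_isPath
  rw [hq, Walk.cons_isPath_iff] at hpath
  refine ⟨c, p.support_bypass_subset_support ?_, hadj, q, hpath.2⟩
  rw [hq, Walk.support_cons]
  exact List.mem_cons_of_mem _ q.start_mem_support

/-- In a forest, distinct neighbours of `x` lie in distinct components of `G - x`: the edge `xc₂`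
is a bridge, so the walk `x, c₁, …, c₂` must use it. -/
lemma IsAcyclic.eq_of_adj_of_reachableAvoiding (hG : G.IsAcyclic) {c₁ c₂ : V}
    (h₁ : G.Adj x c₁) (h₂ : G.Adj x c₂) (h : G.ReachableAvoiding x c₁ c₂) : c₁ = c₂ := by
  obtain ⟨p, hp⟩ := h
  have hbridge := isBridge_iff_forall_walk_mem_edges.mp
    (isAcyclic_iff_forall_adj_isBridge.mp hG h₂) (.cons h₁ p)
  rw [Walk.edges_cons, List.mem_cons] at hbridge
  rcases hbridge with h | h
  · exact Sym2.congr_right.mp h.symm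
  · exact absurd (p.fst_mem_support_of_mem_edges h) hp

end SimpleGraph

section Ancestor

variable {α : Type*} {T : SimpleGraph α} {r x y u v w : α}

lemma IsAncestor.of_reachableAvoiding (h : IsAncestor T r x u)
    (huv : T.ReachableAvoiding x u v) : IsAncestor T r x v := by
  intro q
  by_contra hq
  obtain ⟨p, hp⟩ := huv.symm
  have hx := h (q.append p)
  rw [Walk.mem_support_append_iff] at hx
  exact hx.elim hq hp

lemma IsAncestor.antisymm (hT : T.Preconnected) (h₁ : IsAncestor T r x y)
    (h₂ : IsAncestor T r y x) : x = y := by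
  classical
  by_contra hxy
  obtain ⟨p⟩ := hT r y
  have hx := h₁ p.bypass
  exact Walk.endpoint_notMem_support_takeUntil p.bypass_isPath hx (Ne.symm hxy)
    (h₂ (p.bypass.takeUntil x hx))

/-- Every walk from the root leaves `x` for the last time through a neighbour of `x` on the side
of `u`, which is `c` by acyclicity. -/
lemma IsAncestor.of_adj (hT : T.IsAcyclic) {c : α} (h : IsAncestor T r x u) (hadj : T.Adj x c)
    (hc : T.ReachableAvoiding x c u) : IsAncestor T r c u := by
  classical
  intro q
  have hx := h q
  obtain ⟨c', hc'q, hadj', hc'⟩ := (q.dropUntil x hx).exists_adj_reachableAvoiding hc.ne_right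
  obtain rfl := hT.eq_of_adj_of_reachableAvoiding hadj' hadj (hc'.trans hc.symm)
  exact q.support_dropUntil_subset_support hx hc'q

lemma IsAncestor.reachableAvoiding_of_not_isAncestor (hT : T.Preconnected)
    (h : IsAncestor T r y v) (hyx : ¬IsAncestor T r y x) : T.ReachableAvoiding x y v := by
  classical
  obtain ⟨q, hq⟩ : ∃ q : T.Walk r x, y ∉ q.support := by simpa [IsAncestor] using hyx
  have hxy : x ≠ y := fun hxy => hq (hxy ▸ q.end_mem_support)
  obtain ⟨p⟩ := hT v x
  have hy : y ∈ p.bypass.support := by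
    have hy := h (q.append p.bypass.reverse)
    rw [Walk.mem_support_append_iff, Walk.support_reverse, List.mem_reverse] at hy
    exact hy.resolve_left hq
  exact ReachableAvoiding.symm
    ⟨p.bypass.takeUntil y hy, Walk.endpoint_notMem_support_takeUntil p.bypass_isPath hy hxy⟩

lemma isLCA_self (r u : α) : IsLCA T r u u u :=
  ⟨fun q => q.end_mem_support, fun q => q.end_mem_support, fun _ h _ => h⟩

lemma subset_lcaClosure (r : α) (Y : Set α) : Y ⊆ lcaClosure T r Y :=
  fun y hy => ⟨y, hy, y, hy, isLCA_self r y⟩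

lemma isLCA_of_not_reachableAvoiding (hT : T.Preconnected) (hu : IsAncestor T r x u)
    (hw : IsAncestor T r x w) (huw : ¬T.ReachableAvoiding x u w) : IsLCA T r x u w :=
  ⟨hu, hw, fun _ hyu hyw => by_contra fun hyx =>
    huw ((hyu.reachableAvoiding_of_not_isAncestor hT hyx).symm.trans
      (hyw.reachableAvoiding_of_not_isAncestor hT hyx))⟩

/-- Otherwise the neighbour of `x` towards `u` would be a common ancestor of `u` and `w` strictly
below `x`. -/
lemma IsLCA.not_reachableAvoiding (hT : T.IsTree) (h : IsLCA T r x u w) :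
    ¬T.ReachableAvoiding x u w := by
  intro huw
  obtain ⟨p⟩ := hT.connected.preconnected x u
  obtain ⟨c, -, hadj, hcu⟩ := p.exists_adj_reachableAvoiding huw.ne_left
  have hcx : IsAncestor T r c x :=
    h.2.2 c (h.1.of_adj hT.isAcyclic hadj hcu) (h.2.1.of_adj hT.isAcyclic hadj (hcu.trans huw))
  exact hadj.ne (h.1.of_reachableAvoiding hcu.symm |>.antisymm hT.connected.preconnected hcx)

lemma IsLCA.of_reachableAvoiding {u' w' : α} (hT : T.IsTree) (h : IsLCA T r x u w)
    (hu : T.ReachableAvoiding x u u') (hw : T.ReachableAvoiding x w w') : IsLCA T r x u' w' :=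
  isLCA_of_not_reachableAvoiding hT.connected.preconnected (h.1.of_reachableAvoiding hu)
    (h.2.1.of_reachableAvoiding hw) fun h' =>
      h.not_reachableAvoiding hT ((hu.trans h').trans hw.symm)

end Ancestor

theorem lca_closure_parts_general {α : Type} (T : SimpleGraph α) (hT : T.IsTree)
    (r : α) (Qa : Set (Set α))
    (hconn : ∀ Q ∈ Qa, (T.induce Q).Connected)
    (hpart : ∀ x : α, ∃! Q, Q ∈ Qa ∧ x ∈ Q)
    (X Y : Set α) (hXY : X ⊆ Y) (hX : lcaClosure T r X = X)
    (hQ : {Q ∈ Qa | (Q ∩ X).Nonempty} = {Q ∈ Qa | (Q ∩ Y).Nonempty}) :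
    {Q ∈ Qa | (Q ∩ Y).Nonempty} = {Q ∈ Qa | (Q ∩ lcaClosure T r Y).Nonempty} := by
  ext Q
  refine ⟨fun ⟨hQa, hQY⟩ =>
    ⟨hQa, hQY.mono (Set.inter_subset_inter_right _ (subset_lcaClosure r Y))⟩, ?_⟩
  rintro ⟨hQa, x, hxQ, u, hu, w, hw, hlca⟩
  refine ⟨hQa, by_contra fun hQY => ?_⟩
  have near : ∀ y ∈ Y, ∃ y' ∈ X, T.ReachableAvoiding x y y' := by
    intro y hy
    obtain ⟨P, ⟨hP, hyP⟩, -⟩ := hpart y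
    obtain ⟨-, y', hy'P, hy'X⟩ : P ∈ {Q ∈ Qa | (Q ∩ X).Nonempty} := hQ ▸ ⟨hP, y, hyP, hy⟩
    have hxP : x ∉ P := fun hxP =>
      hQY ⟨y, (hpart x).unique ⟨hQa, hxQ⟩ ⟨hP, hxP⟩ ▸ hyP, hy⟩
    exact ⟨y', hy'X, .of_induce_preconnected (hconn P hP).preconnected hyP hy'P hxP⟩
  obtain ⟨u', hu'X, hu'⟩ := near u hu
  obtain ⟨w', hw'X, hw'⟩ := near w hw
  have hxX : x ∈ X := hX ▸ ⟨u', hu'X, w', hw'X, hlca.of_reachableAvoiding hT hu' hw'⟩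
  exact hQY ⟨x, hxQ, hXY hxX⟩

/-- for a collection `Qa` of connected subgraphs of a rooted tree `T` whose
vertex sets partition `V(T)`, if `X ⊆ Y`, `X` is LCA-closed, and the members meeting `X`
are exactly those meeting `Y`, then the members meeting `Y` are exactly those meeting the
LCA closure of `Y`. -/
theorem lca_closure_parts {α : Type} [Fintype α] (T : SimpleGraph α) (hT : T.IsTree)
    (r : α) (Qa : Set (Set α))
    (hconn : ∀ Q ∈ Qa, (T.induce Q).Connected)
    (hpart : ∀ x : α, ∃! Q, Q ∈ Qa ∧ x ∈ Q)
    (X Y : Set α) (hXY : X ⊆ Y) (hX : lcaClosure T r X = X)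
    (hQ : {Q ∈ Qa | (Q ∩ X).Nonempty} = {Q ∈ Qa | (Q ∩ Y).Nonempty}) :
    {Q ∈ Qa | (Q ∩ Y).Nonempty} = {Q ∈ Qa | (Q ∩ lcaClosure T r Y).Nonempty} :=
  lca_closure_parts_general T hT r Qa hconn hpart X Y hXY hX hQ
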